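/- arXiv:2209.08424 — 3 statements merged into one kernel-verified Lean document; each statement's English description precedes it below -/
import Mathlib

section
/- Let P be a probability measure on a measurable space M and suppose ρ ∈ L²(P) satisfies ∫ ρ dP = 0 and ρ ≥ c P-a.e. for some real constant c < 0. Then the measure Q defined by dQ = (1 − c⁻¹ρ) dP is a probability measure, and for every f ∈ L²(P) with ∫ fρ dP = 0 one has ∫ f dQ = ∫ f dP. -/
open MeasureTheory

section WithDensityOfReal

variable {X : Type*} [MeasurableSpace X] {μ : Measure X} {g : X → ℝ}

theorem integral_withDensity_ofReal_eq_integral_smul {E : Type*} [NormedAddCommGroup E]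
    [NormedSpace ℝ E] (hg : AEMeasurable g μ) (hg0 : 0 ≤ᵐ[μ] g) (f : X → E) :
    ∫ x, f x ∂μ.withDensity (fun x => ENNReal.ofReal (g x)) = ∫ x, g x • f x ∂μ := by
  rw [integral_withDensity_eq_integral_toReal_smul₀ hg.ennreal_ofReal
    (Filter.Eventually.of_forall fun _ => ENNReal.ofReal_lt_top)]
  refine integral_congr_ae ?_
  filter_upwards [hg0] with x hx
  rw [ENNReal.toReal_ofReal hx]

theorem isProbabilityMeasure_withDensity_ofReal (hgi : Integrable g μ) (hg0 : 0 ≤ᵐ[μ] g)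
    (hg1 : ∫ x, g x ∂μ = 1) :
    IsProbabilityMeasure (μ.withDensity fun x => ENNReal.ofReal (g x)) := by
  constructor
  rw [withDensity_apply _ MeasurableSet.univ, Measure.restrict_univ,
    ← ofReal_integral_eq_lintegral_ofReal hgi hg0, hg1, ENNReal.ofReal_one]

end WithDensityOfReal

theorem one_sub_inv_mul_nonneg {c r : ℝ} (hc : c < 0) (hr : c ≤ r) : 0 ≤ 1 - c⁻¹ * r := by
  have : c⁻¹ * r ≤ 1 := by
    simpa [inv_mul_cancel₀ hc.ne] using mul_le_mul_of_nonpos_left hr (inv_nonpos.mpr hc.le)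
  linarith

/-- If `ρ ∈ L²(P)` has mean zero and is bounded below `P`-a.e. by a constant `c < 0`, then
`dQ = (1 - c⁻¹ ρ) dP` is a probability measure whose integrals agree with those of `P`
on every `f ∈ L²(P)` orthogonal to `ρ`. -/
theorem stmt1 {M : Type*} [MeasurableSpace M] (P : Measure M) [IsProbabilityMeasure P]
    (ρ : M → ℝ) (hρ : MemLp ρ 2 P) (hmean : ∫ x, ρ x ∂P = 0)
    (c : ℝ) (hc : c < 0) (hlb : ∀ᵐ x ∂P, c ≤ ρ x)
    (Q : Measure M) (hQ : Q = P.withDensity fun x => ENNReal.ofReal (1 - c⁻¹ * ρ x)) :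
    IsProbabilityMeasure Q ∧
      ∀ f : M → ℝ, MemLp f 2 P → (∫ x, f x * ρ x ∂P = 0) →
        ∫ x, f x ∂Q = ∫ x, f x ∂P := by
  have hρi : Integrable ρ P := hρ.integrable one_le_two
  have hg0 : ∀ᵐ x ∂P, 0 ≤ 1 - c⁻¹ * ρ x := hlb.mono fun _ => one_sub_inv_mul_nonneg hc
  subst hQ
  refine ⟨isProbabilityMeasure_withDensity_ofReal ((integrable_const 1).sub (hρi.const_mul _))
    hg0 ?_, fun f hf horth => ?_⟩
  · rw [integral_sub (integrable_const 1) (hρi.const_mul _), integral_const_mul, hmean]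
    simp
  · have hfi : Integrable f P := hf.integrable one_le_two
    have hfρ : Integrable (fun x => f x * ρ x) P := hf.integrable_mul hρ
    calc ∫ x, f x ∂P.withDensity (fun x => ENNReal.ofReal (1 - c⁻¹ * ρ x))
        = ∫ x, f x - c⁻¹ * (f x * ρ x) ∂P := by
          rw [integral_withDensity_ofReal_eq_integral_smul
            ((hρi.aemeasurable.const_mul _).const_sub 1) hg0]
          congr 1 with x
          rw [smul_eq_mul]; ring
      _ = ∫ x, f x ∂P := by
          rw [integral_sub hfi (hfρ.const_mul _), integral_const_mul, horth, mul_zero, sub_zero]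
end

section
/- Let (S, μ) be a finite measure space and f : S → ℝ a μ-a.e. finite measurable function. Let F = {ψ ∈ L²(μ) : f·ψ ∈ L²(μ)} and suppose: (a) ∫ f ψ² dμ ≥ 0 for all ψ ∈ F, and (c) {f·ψ : ψ ∈ F} = L²(μ). Then f > 0 μ-almost everywhere (in particular μ{f = 0} = 0 and μ{f < 0} = 0). -/
/-!
Surjectivity gives some `ψ` with `f ψ = 1` a.e., so `f ≠ 0` a.e. For positivity, test the form
against `ψ = 1_{f < 0} / (1 - f)`, which is bounded with `f ψ` bounded: then `f ψ²` is a
nonpositive function with nonnegative integral, hence vanishes a.e., and it vanishes exactly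
where `f ≥ 0`.
-/

open MeasureTheory Filter Set

noncomputable def negTest : ℝ → ℝ := (Iio 0).indicator fun t => (1 - t)⁻¹

lemma negTest_of_neg {t : ℝ} (ht : t < 0) : negTest t = (1 - t)⁻¹ :=
  indicator_of_mem (mem_Iio.2 ht) _

lemma measurable_negTest : Measurable negTest :=
  (measurable_const.sub measurable_id).inv.indicator measurableSet_Iio

lemma abs_negTest_le_one (t : ℝ) : |negTest t| ≤ 1 := by
  by_cases ht : t < 0
  · rw [negTest_of_neg ht, abs_inv, abs_of_pos (by linarith)]
    exact inv_le_one_of_one_le₀ (by linarith)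
  · simp [negTest, ht]

lemma abs_mul_negTest_le_one (t : ℝ) : |t * negTest t| ≤ 1 := by
  by_cases ht : t < 0
  · rw [negTest_of_neg ht, ← div_eq_mul_inv, abs_div, abs_of_neg ht,
      abs_of_pos (by linarith), div_le_one (by linarith)]
    linarith
  · simp [negTest, ht]

lemma mul_negTest_sq_nonpos (t : ℝ) : t * negTest t ^ 2 ≤ 0 := by
  by_cases ht : t < 0
  · exact mul_nonpos_of_nonpos_of_nonneg ht.le (sq_nonneg _)
  · simp [negTest, ht]

lemma nonneg_of_mul_negTest_sq_eq_zero {t : ℝ} (h : t * negTest t ^ 2 = 0) : 0 ≤ t := by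
  by_contra! ht
  rw [negTest_of_neg ht] at h
  have : (1 - t)⁻¹ ≠ 0 := inv_ne_zero (by linarith)
  simp_all

section

variable {S : Type*} [MeasurableSpace S] {μ : Measure S}

lemma ae_eq_zero_of_nonpos_of_integral_nonneg {g : S → ℝ} (hg : Integrable g μ)
    (hle : g ≤ᵐ[μ] 0) (h : 0 ≤ ∫ x, g x ∂μ) : g =ᵐ[μ] 0 := by
  refine (integral_eq_iff_of_ae_le hg (integrable_zero S ℝ μ) hle).1 ?_
  rw [Pi.zero_def, integral_zero]
  exact le_antisymm (integral_nonpos_of_ae hle) h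

theorem ae_nonneg_of_integral_mul_sq_nonneg [IsFiniteMeasure μ] {f : S → ℝ} (hf : Measurable f)
    (hquad : ∀ ψ : S → ℝ, MemLp ψ 2 μ → MemLp (fun x => f x * ψ x) 2 μ →
      0 ≤ ∫ x, f x * ψ x ^ 2 ∂μ) :
    ∀ᵐ x ∂μ, 0 ≤ f x := by
  have hψ : Measurable fun x => negTest (f x) := measurable_negTest.comp hf
  have hψ_memLp : MemLp (fun x => negTest (f x)) 2 μ :=
    .of_bound hψ.aestronglyMeasurable 1 (ae_of_all _ fun x => abs_negTest_le_one _)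
  have hfψ_memLp : MemLp (fun x => f x * negTest (f x)) 2 μ :=
    .of_bound (hf.mul hψ).aestronglyMeasurable 1 (ae_of_all _ fun x => abs_mul_negTest_le_one _)
  have hint : Integrable (fun x => f x * negTest (f x) ^ 2) μ := by
    refine .of_bound (hf.mul (hψ.pow_const 2)).aestronglyMeasurable 1 (ae_of_all _ fun x => ?_)
    rw [Real.norm_eq_abs, ← mul_one (1 : ℝ), sq, ← mul_assoc, abs_mul]
    exact mul_le_mul (abs_mul_negTest_le_one _) (abs_negTest_le_one _) (abs_nonneg _) zero_le_one
  have hzero := ae_eq_zero_of_nonpos_of_integral_nonneg hint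
    (ae_of_all _ fun x => mul_negTest_sq_nonpos _) (hquad _ hψ_memLp hfψ_memLp)
  filter_upwards [hzero] with x hx
  exact nonneg_of_mul_negTest_sq_eq_zero hx

end

/-- Spectral-representation step: if multiplication by `f` on `L²(μ)` (with natural domain)
has a nonnegative quadratic form and is surjective onto `L²(μ)`, then `f > 0` a.e. -/
theorem stmt7 {S : Type*} [MeasurableSpace S] (μ : Measure S) [IsFiniteMeasure μ]
    (f : S → ℝ) (hf : Measurable f)
    (hquad : ∀ ψ : S → ℝ, MemLp ψ 2 μ → MemLp (fun x => f x * ψ x) 2 μ →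
      0 ≤ ∫ x, f x * ψ x ^ 2 ∂μ)
    (hsurj : ∀ g : S → ℝ, MemLp g 2 μ →
      ∃ ψ : S → ℝ, MemLp ψ 2 μ ∧ MemLp (fun x => f x * ψ x) 2 μ ∧
        (fun x => f x * ψ x) =ᵐ[μ] g) :
    ∀ᵐ x ∂μ, 0 < f x := by
  have hne : ∀ᵐ x ∂μ, f x ≠ 0 := by
    obtain ⟨ψ, -, -, hfψ⟩ := hsurj 1 (memLp_const 1)
    filter_upwards [hfψ] with x hx h0
    simp [h0] at hx
  filter_upwards [ae_nonneg_of_integral_mul_sq_nonneg hf hquad, hne] with x hnonneg hne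
  exact hnonneg.lt_of_ne hne.symm
end

section
/- Let P be a probability measure and Q a probability measure with Q ≪ P and dQ/dP ∈ L²(P). Let D ⊆ L²₀(P) be a dense subspace of the mean-zero subspace of L²(P). If ∫ f dQ = 0 for all f ∈ D, then Q = P. -/
open MeasureTheory
open scoped ENNReal InnerProductSpace

/-!
Write `g ∈ L²(P)` for the density `dQ/dP = ρ⁺`, so that `⟪g, h⟫ = ∫ h dQ` for every `h ∈ L²(P)`.
This functional vanishes on `D`, hence on its closure, which is the orthogonal complement of the
constant `1`. Since `P` and `Q` are probability measures, `g - 1` lies in that complement, so both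
`⟪g, g - 1⟫` and `⟪1, g - 1⟫` vanish, and `‖g - 1‖² = 0`.
-/

theorem eq_of_inner_eq_zero_of_closure_eq_orthogonal {𝕜 E : Type*} [RCLike 𝕜]
    [NormedAddCommGroup E] [InnerProductSpace 𝕜 E] {D : Submodule 𝕜 E} {e u : E}
    (hD : closure (D : Set E) = {h | ⟪e, h⟫_𝕜 = 0}) (hu : ∀ h ∈ D, ⟪u, h⟫_𝕜 = 0)
    (hue : ⟪e, u⟫_𝕜 = ⟪e, e⟫_𝕜) : u = e := by
  have hperp : ⟪e, u - e⟫_𝕜 = 0 := by rw [inner_sub_right, hue, sub_self]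
  have hclosure : u - e ∈ closure (D : Set E) := by rw [hD]; exact hperp
  have hclosed : IsClosed {h : E | ⟪u, h⟫_𝕜 = 0} :=
    isClosed_eq (innerSL 𝕜 u).continuous continuous_const
  have hu' : ⟪u, u - e⟫_𝕜 = 0 := hclosed.closure_subset_iff.2 hu hclosure
  rw [← sub_eq_zero, ← inner_self_eq_zero (𝕜 := 𝕜), inner_sub_left, hu', hperp, sub_self]

namespace MeasureTheory

variable {α : Type*} [MeasurableSpace α] {μ : Measure α}

theorem L2.inner_const_one [IsFiniteMeasure μ] (f : Lp ℝ 2 μ) :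
    ⟪Lp.const 2 μ (1 : ℝ), f⟫_ℝ = ∫ x, f x ∂μ := by
  rw [← indicatorConstLp_univ, L2.inner_indicatorConstLp_one, setIntegral_univ]

theorem L2.inner_const_one_self [IsProbabilityMeasure μ] :
    ⟪Lp.const 2 μ (1 : ℝ), Lp.const 2 μ 1⟫_ℝ = 1 := by
  rw [L2.inner_const_one, integral_congr_ae (Lp.coeFn_const 2 μ 1)]
  simp

theorem integral_withDensity_ofReal {ρ : α → ℝ} (hρ : AEMeasurable ρ μ) (f : α → ℝ) :
    ∫ x, f x ∂μ.withDensity (fun x => ENNReal.ofReal (ρ x)) = ∫ x, max (ρ x) 0 * f x ∂μ := by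
  refine (integral_withDensity_eq_integral_smul₀ hρ.real_toNNReal f).trans ?_
  simp only [NNReal.smul_def, Real.coe_toNNReal', smul_eq_mul]

theorem L2.inner_toLp_posPart_eq_integral_withDensity {ρ : α → ℝ} (hρ : MemLp ρ 2 μ)
    (f : Lp ℝ 2 μ) :
    ⟪hρ.pos_part.toLp (fun x => max (ρ x) 0), f⟫_ℝ =
      ∫ x, f x ∂μ.withDensity (fun x => ENNReal.ofReal (ρ x)) := by
  rw [integral_withDensity_ofReal hρ.aestronglyMeasurable.aemeasurable, L2.inner_def]
  refine integral_congr_ae ?_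
  filter_upwards [hρ.pos_part.coeFn_toLp] with x hx
  rw [hx, RCLike.inner_apply', conj_trivial]

theorem withDensity_ofReal_eq_self_of_toLp_posPart_eq_one [IsFiniteMeasure μ] {ρ : α → ℝ}
    (hρ : MemLp ρ 2 μ) (h : hρ.pos_part.toLp (fun x => max (ρ x) 0) = Lp.const 2 μ 1) :
    μ.withDensity (fun x => ENNReal.ofReal (ρ x)) = μ := by
  have hρ_ae : ∀ᵐ x ∂μ, ENNReal.ofReal (ρ x) = 1 := by
    filter_upwards [Lp.ext_iff.1 h, hρ.pos_part.coeFn_toLp, Lp.coeFn_const 2 μ (1 : ℝ)]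
      with x hx hpos hone
    have hmax : max (ρ x) 0 = 1 := by rw [← hpos, hx, hone, Function.const_apply]
    simpa using congrArg ENNReal.ofReal hmax
  rw [withDensity_congr_ae hρ_ae]
  exact withDensity_one

end MeasureTheory

theorem stmt10_general {M : Type*} [MeasurableSpace M] (P : Measure M) [IsProbabilityMeasure P]
    (ρ : M → ℝ) (hρ : MemLp ρ 2 P)
    (Q : Measure M) [IsProbabilityMeasure Q]
    (hQ : Q = P.withDensity fun x => ENNReal.ofReal (ρ x))
    (D : Submodule ℝ (Lp ℝ 2 P))
    (hDdense : closure (D : Set (Lp ℝ 2 P)) = {f : Lp ℝ 2 P | ∫ x, f x ∂P = 0})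
    (hzero : ∀ f ∈ D, ∫ x, f x ∂Q = 0) :
    Q = P := by
  have hinner (f : Lp ℝ 2 P) :
      ⟪hρ.pos_part.toLp (fun x => max (ρ x) 0), f⟫_ℝ = ∫ x, f x ∂Q := by
    rw [hQ, L2.inner_toLp_posPart_eq_integral_withDensity hρ]
  have hdensity_eq_one : hρ.pos_part.toLp (fun x => max (ρ x) 0) = Lp.const 2 P 1 := by
    refine eq_of_inner_eq_zero_of_closure_eq_orthogonal (D := D) ?_
      (fun h hh => (hinner h).trans (hzero h hh)) ?_
    · simp only [hDdense, L2.inner_const_one]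
    · have hmass : ∫ x, max (ρ x) 0 ∂P = 1 := by
        have := integral_withDensity_ofReal hρ.aestronglyMeasurable.aemeasurable fun _ => (1 : ℝ)
        rw [← hQ] at this
        simpa using this.symm
      rw [L2.inner_const_one_self, L2.inner_const_one,
        integral_congr_ae hρ.pos_part.coeFn_toLp, hmass]
  rw [hQ]
  exact withDensity_ofReal_eq_self_of_toLp_posPart_eq_one hρ hdensity_eq_one

/-- (C1) of Theorem 3.5: if `Q ≪ P` with `dQ/dP ∈ L²(P)` and `∫ f dQ = 0` for all `f` in a
dense subspace `D` of the mean-zero subspace `L²₀(P)`, then `Q = P`. -/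
theorem stmt10 {M : Type*} [MeasurableSpace M] (P : Measure M) [IsProbabilityMeasure P]
    (ρ : M → ℝ) (hρ : MemLp ρ 2 P)
    (Q : Measure M) [IsProbabilityMeasure Q]
    (hQ : Q = P.withDensity fun x => ENNReal.ofReal (ρ x))
    (D : Submodule ℝ (Lp ℝ 2 P))
    (hD0 : ∀ f ∈ D, ∫ x, f x ∂P = 0)
    (hDdense : closure (D : Set (Lp ℝ 2 P)) = {f : Lp ℝ 2 P | ∫ x, f x ∂P = 0})
    (hzero : ∀ f ∈ D, ∫ x, f x ∂Q = 0) :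
    Q = P :=
  stmt10_general P ρ hρ Q hQ D hDdense hzero
end
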